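/- arXiv:2505.10137 — 2 statements merged into one kernel-verified Lean document; each statement's English description precedes it below -/
import Mathlib

section
/- For any fixed s ∈ (0,1), (1-s)^θ · ∫_θ^∞ y^{θ-1} e^{-y(1-s)} dy / Γ(θ) → 1 as θ → ∞. -/
/-!
Substituting `x = (1 - s) y` turns the numerator into the upper incomplete gamma integral
`Γ(θ, cθ)` with `c = 1 - s < 1`, so the ratio is `1 - γ(θ, cθ) / Γ(θ)`. The lower part is
killed by a Chernoff bound: on `x ≤ cθ` we have `e^{-x} ≤ e^{(1-c)θ} e^{-x/c}`, whence
`γ(θ, cθ) ≤ (c e^{1-c})^θ Γ(θ)`, and `c e^{1-c} < 1` because `c < e^{c-1}`.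
-/

open Filter MeasureTheory Set Real

noncomputable section

def lowerIncompleteGamma (θ t : ℝ) : ℝ := ∫ x in Ioc 0 t, exp (-x) * x ^ (θ - 1)

def upperIncompleteGamma (θ t : ℝ) : ℝ := ∫ x in Ioi t, exp (-x) * x ^ (θ - 1)

lemma lowerIncompleteGamma_add_upperIncompleteGamma {θ t : ℝ} (hθ : 0 < θ) (ht : 0 ≤ t) :
    lowerIncompleteGamma θ t + upperIncompleteGamma θ t = Gamma θ := by
  have hint := Real.GammaIntegral_convergent hθ
  rw [Gamma_eq_integral hθ, ← Ioc_union_Ioi_eq_Ioi ht,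
    setIntegral_union Ioc_disjoint_Ioi_same measurableSet_Ioi
      (hint.mono_set Ioc_subset_Ioi_self) (hint.mono_set (Ioi_subset_Ioi ht))]
  rfl

lemma rpow_mul_integral_Ioi_eq_upperIncompleteGamma {c t : ℝ} (θ : ℝ) (hc : 0 < c)
    (ht : 0 ≤ t) :
    c ^ θ * ∫ y in Ioi t, y ^ (θ - 1) * exp (-y * c) = upperIncompleteGamma θ (c * t) := by
  have hscaled : ∫ y in Ioi t, exp (-(c * y)) * (c * y) ^ (θ - 1)
      = c ^ (θ - 1) * ∫ y in Ioi t, y ^ (θ - 1) * exp (-y * c) := by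
    rw [← integral_const_mul]
    refine setIntegral_congr_fun measurableSet_Ioi fun y hy => ?_
    rw [mul_rpow hc.le (ht.trans hy.le), show -(c * y) = -y * c by ring]
    ring
  have hsub := integral_comp_mul_left_Ioi' (fun x => exp (-x) * x ^ (θ - 1)) t hc
  rw [smul_eq_mul, hscaled, ← mul_assoc, rpow_sub_one hc.ne', mul_div_cancel₀ _ hc.ne'] at hsub
  rw [upperIncompleteGamma, ← hsub]

lemma lowerIncompleteGamma_mul_le {c θ : ℝ} (hc₀ : 0 < c) (hc₁ : c ≤ 1) (hθ : 0 < θ) :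
    lowerIncompleteGamma θ (c * θ) ≤ (c * exp (1 - c)) ^ θ * Gamma θ := by
  have hdilated : IntegrableOn (fun x : ℝ => x ^ (θ - 1) * exp (-c⁻¹ * x)) (Ioi 0) := by
    simpa only [rpow_one] using integrableOn_rpow_mul_exp_neg_mul_rpow (p := 1)
      (by linarith) zero_lt_one (inv_pos.mpr hc₀)
  have hdominated : IntegrableOn
      (fun x => exp ((1 - c) * θ) * (x ^ (θ - 1) * exp (-c⁻¹ * x))) (Ioi 0) :=
    hdilated.const_mul _
  calc lowerIncompleteGamma θ (c * θ)
      ≤ ∫ x in Ioc 0 (c * θ), exp ((1 - c) * θ) * (x ^ (θ - 1) * exp (-c⁻¹ * x)) := by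
        refine setIntegral_mono_on
          ((Real.GammaIntegral_convergent hθ).mono_set Ioc_subset_Ioi_self)
          (hdominated.mono_set Ioc_subset_Ioi_self) measurableSet_Ioc fun x hx => ?_
        rw [mul_comm (exp _), mul_left_comm, ← exp_add]
        refine mul_le_mul_of_nonneg_left (exp_le_exp.mpr ?_) (rpow_nonneg hx.1.le _)
        -- `(c⁻¹ - 1) x ≤ (c⁻¹ - 1) cθ = (1 - c) θ`
        have hslope : 0 ≤ c⁻¹ - 1 := sub_nonneg.mpr (one_le_inv₀ hc₀ |>.mpr hc₁)
        have hend : (c⁻¹ - 1) * (c * θ) = (1 - c) * θ := by field_simp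
        nlinarith [mul_le_mul_of_nonneg_left hx.2 hslope]
    _ ≤ ∫ x in Ioi 0, exp ((1 - c) * θ) * (x ^ (θ - 1) * exp (-c⁻¹ * x)) := by
        refine setIntegral_mono_set hdominated ?_ Ioc_subset_Ioi_self.eventuallyLE
        filter_upwards [self_mem_ae_restrict measurableSet_Ioi] with x (hx : 0 < x)
        positivity
    _ = (c * exp (1 - c)) ^ θ * Gamma θ := by
        simp_rw [integral_const_mul, neg_mul,
          integral_rpow_mul_exp_neg_mul_Ioi hθ (inv_pos.mpr hc₀), one_div, inv_inv,
          mul_rpow hc₀.le (exp_pos _).le, ← exp_mul]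
        ring_nf

lemma mul_exp_one_sub_lt_one {c : ℝ} (hc : c ≠ 1) : c * exp (1 - c) < 1 := by
  have hlt : c < exp (c - 1) := by linarith [add_one_lt_exp (sub_ne_zero.mpr hc)]
  calc c * exp (1 - c) < exp (c - 1) * exp (1 - c) := mul_lt_mul_of_pos_right hlt (exp_pos _)
    _ = 1 := by rw [← exp_add, sub_add_sub_cancel', sub_self, exp_zero]

lemma tendsto_lowerIncompleteGamma_mul_div_Gamma {c : ℝ} (hc₀ : 0 < c) (hc₁ : c < 1) :
    Tendsto (fun θ => lowerIncompleteGamma θ (c * θ) / Gamma θ) atTop (nhds 0) := by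
  refine tendsto_of_tendsto_of_tendsto_of_le_of_le' tendsto_const_nhds
    (tendsto_rpow_atTop_of_base_lt_one _ (neg_one_lt_zero.trans (mul_pos hc₀ (exp_pos _)))
      (mul_exp_one_sub_lt_one hc₁.ne)) ?_ ?_
  all_goals filter_upwards [eventually_gt_atTop 0] with θ hθ
  · refine div_nonneg (setIntegral_nonneg measurableSet_Ioc fun x hx => ?_)
      (Gamma_pos_of_pos hθ).le
    exact mul_nonneg (exp_pos _).le (rpow_nonneg hx.1.le _)
  · rw [div_le_iff₀ (Gamma_pos_of_pos hθ)]
    exact lowerIncompleteGamma_mul_le hc₀ hc₁.le hθ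

end

/-- for fixed `s ∈ (0,1)`,
`(1-s)^θ ∫_θ^∞ y^{θ-1} e^{-y(1-s)} dy / Γ(θ) → 1` as `θ → ∞`. -/
theorem stmt4 (s : ℝ) (hs : s ∈ Set.Ioo (0 : ℝ) 1) :
    Tendsto (fun θ : ℝ =>
        (1 - s) ^ θ * (∫ y in Ioi θ, y ^ (θ - 1) * Real.exp (-y * (1 - s))) / Real.Gamma θ)
      atTop (nhds 1) := by
  obtain ⟨hs₀, hs₁⟩ := hs
  have hc₀ : 0 < 1 - s := by linarith
  have hlimit : Tendsto (fun θ => 1 - lowerIncompleteGamma θ ((1 - s) * θ) / Gamma θ)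
      atTop (nhds 1) := by
    simpa using (tendsto_lowerIncompleteGamma_mul_div_Gamma hc₀ (by linarith)).const_sub 1
  refine hlimit.congr' ?_
  filter_upwards [eventually_gt_atTop 0] with θ hθ
  rw [rpow_mul_integral_Ioi_eq_upperIncompleteGamma θ hc₀ hθ.le, sub_eq_iff_eq_add, ← add_div,
    add_comm, lowerIncompleteGamma_add_upperIncompleteGamma hθ (by positivity),
    div_self (Gamma_pos_of_pos hθ).ne']
end

section
/- Let f be a probability generating function with iterates f_n, let J_0 = min{j ≥ 1 : P(ξ = j) > 0}, and suppose P(ξ = J_0) > 0 and f'(f_n(0)) > 0 for all n. Then for every n ≥ 0, J_0!·P(Z(n+1)=J_0) = f_{n+1}^{(J_0)}(0) = P(ξ = J_0)·∏_{i=1}^{n} f'(f_i(0)) > 0, where Z is the associated Galton-Watson process started from one particle. -/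
/-!
Write `f_n` for the `n`-th iterate of `f`. Since `f_n(0) ∈ [0, 1)` lies inside the disc of
convergence of `f`, each `f_{n+1} = f ∘ f_n` is analytic at `0`, and its power series is the
composition of the series of `f` at `f_n(0)` with that of `f_n` at `0`. If the coefficients of
`f_n` of orders `1, …, J - 1` vanish, then in the composition formula every ordered partition of `J`
other than `J` itself has a block of size in `[1, J)`, so the coefficient of order `J` of `f_{n+1}`
is `f'(f_n(0))` times that of `f_n`, and the lower ones still vanish. For `f_1 = f` these
coefficients are `p_1, …, p_{J-1} = 0` and `p_J`, and the `J`-th derivative at `0` is `J!` times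
the `J`-th coefficient.
-/

open FormalMultilinearSeries Set

namespace FormalMultilinearSeries

variable {𝕜 F : Type*} [NontriviallyNormedField 𝕜] [NormedAddCommGroup F] [NormedSpace 𝕜 F]

theorem coeff_comp (q : FormalMultilinearSeries 𝕜 𝕜 F) (P : FormalMultilinearSeries 𝕜 𝕜 𝕜)
    (m : ℕ) :
    (q.comp P).coeff m =
      ∑ c : Composition m, (∏ i, P.coeff (c.blocksFun i)) • q.coeff c.length := by
  change (q.comp P) m (fun _ ↦ 1) = _
  simp only [FormalMultilinearSeries.comp, _root_.sum_apply, compAlongComposition_apply]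
  refine Finset.sum_congr rfl fun c _ ↦ ?_
  have : P.applyComposition c (fun _ ↦ 1) = fun i ↦ P.coeff (c.blocksFun i) := by
    funext i
    simp [applyComposition, apply_eq_prod_smul_coeff]
  rw [this, apply_eq_prod_smul_coeff]

variable {P : FormalMultilinearSeries 𝕜 𝕜 𝕜} {J : ℕ}

theorem prod_coeff_blocksFun_eq_zero (hP : ∀ j ∈ Ico 1 J, P.coeff j = 0) {m : ℕ} (hm : 0 < m)
    {c : Composition m} (hc : ∀ i, c.blocksFun i < J) : ∏ i, P.coeff (c.blocksFun i) = 0 :=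
  Finset.prod_eq_zero (Finset.mem_univ ⟨0, c.length_pos_of_pos hm⟩)
    (hP _ ⟨c.one_le_blocksFun _, hc _⟩)

theorem coeff_comp_eq_zero_of_mem_Ico (q : FormalMultilinearSeries 𝕜 𝕜 F)
    (hP : ∀ j ∈ Ico 1 J, P.coeff j = 0) {m : ℕ} (hm : m ∈ Ico 1 J) : (q.comp P).coeff m = 0 := by
  rw [coeff_comp]
  refine Finset.sum_eq_zero fun c _ ↦ ?_
  rw [prod_coeff_blocksFun_eq_zero hP hm.1 fun i ↦ (c.blocksFun_le i).trans_lt hm.2, zero_smul]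

theorem coeff_comp_of_coeff_eq_zero (q : FormalMultilinearSeries 𝕜 𝕜 F)
    (hP : ∀ j ∈ Ico 1 J, P.coeff j = 0) (hJ : 0 < J) :
    (q.comp P).coeff J = P.coeff J • q.coeff 1 := by
  rw [coeff_comp, Finset.sum_eq_single (Composition.single J hJ)]
  · rw [Finset.prod_congr rfl fun i _ ↦ congrArg P.coeff (Composition.single_blocksFun hJ i),
      Finset.prod_const, Finset.card_univ, Fintype.card_fin, Composition.single_length, pow_one]
  · intro c _ hc
    rw [prod_coeff_blocksFun_eq_zero hP hJ ((Composition.ne_single_iff hJ).mp hc), zero_smul]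
  · simp

end FormalMultilinearSeries

section Composition

variable {𝕜 F : Type*} [NontriviallyNormedField 𝕜] [NormedAddCommGroup F] [NormedSpace 𝕜 F]
  {J : ℕ}

theorem HasFPowerSeriesAt.iteratedDeriv_eq_factorial_smul_coeff [CompleteSpace F] {g : 𝕜 → F}
    {P : FormalMultilinearSeries 𝕜 𝕜 F} {x : 𝕜} (h : HasFPowerSeriesAt g P x) (m : ℕ) :
    iteratedDeriv m g x = m.factorial • P.coeff m := by
  obtain ⟨r, hr⟩ := h
  rw [iteratedDeriv_eq_iteratedFDeriv, ← hr.factorial_smul 1 m]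
  rfl

theorem AnalyticAt.exists_hasFPowerSeriesAt_comp {g : 𝕜 → F} {h : 𝕜 → 𝕜}
    {P : FormalMultilinearSeries 𝕜 𝕜 𝕜} {x : 𝕜}
    (hg : AnalyticAt 𝕜 g (h x)) (hh : HasFPowerSeriesAt h P x)
    (hP : ∀ j ∈ Ico 1 J, P.coeff j = 0) (hJ : 0 < J) :
    ∃ Q : FormalMultilinearSeries 𝕜 𝕜 F, HasFPowerSeriesAt (g ∘ h) Q x ∧
      (∀ j ∈ Ico 1 J, Q.coeff j = 0) ∧ Q.coeff J = P.coeff J • deriv g (h x) := by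
  obtain ⟨q, hq⟩ := hg
  refine ⟨q.comp P, hq.comp hh, fun j hj ↦ coeff_comp_eq_zero_of_mem_Ico q hP hj, ?_⟩
  rw [coeff_comp_of_coeff_eq_zero q hP hJ, hq.deriv]
  rfl

theorem HasFPowerSeriesAt.exists_hasFPowerSeriesAt_iterate {g : 𝕜 → 𝕜}
    {P : FormalMultilinearSeries 𝕜 𝕜 𝕜} {x : 𝕜} (hP : HasFPowerSeriesAt g P x)
    (hP_coeff : ∀ j ∈ Ico 1 J, P.coeff j = 0) (hJ : 0 < J)
    (hg : ∀ i, AnalyticAt 𝕜 g (g^[i] x)) (m : ℕ) :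
    ∃ Q : FormalMultilinearSeries 𝕜 𝕜 𝕜, HasFPowerSeriesAt (g^[m + 1]) Q x ∧
      (∀ j ∈ Ico 1 J, Q.coeff j = 0) ∧
      Q.coeff J = P.coeff J * ∏ i ∈ Finset.Icc 1 m, deriv g (g^[i] x) := by
  induction m with
  | zero => exact ⟨P, by simpa using hP, hP_coeff, by simp⟩
  | succ m ih =>
    obtain ⟨Q, hQ, hQ_coeff, hQJ⟩ := ih
    obtain ⟨R, hR, hR_coeff, hRJ⟩ := (hg (m + 1)).exists_hasFPowerSeriesAt_comp hQ hQ_coeff hJ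
    refine ⟨R, by rwa [Function.iterate_succ'], hR_coeff, ?_⟩
    rw [hRJ, hQJ, Finset.prod_Icc_succ_top (by omega), smul_eq_mul, mul_assoc]

end Composition

section GeneratingFunction

noncomputable def pgf (p : ℕ → ℝ) (s : ℝ) : ℝ := ∑' i, p i * s ^ i

variable {p : ℕ → ℝ}

theorem pgf_eq_sum_ofScalars (p : ℕ → ℝ) : pgf p = (ofScalars ℝ p).sum := by
  funext s
  simp [pgf, FormalMultilinearSeries.sum, mul_comm]

theorem hasFPowerSeriesOnBall_pgf (hp : ∀ i, 0 ≤ p i) (hsum : Summable p) :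
    HasFPowerSeriesOnBall (pgf p) (ofScalars ℝ p) 0 1 := by
  have hradius : 1 ≤ (ofScalars ℝ p).radius := by
    simpa using (ofScalars ℝ p).le_radius_of_summable_norm (r := 1)
      (by simpa [ofScalars_norm, abs_of_nonneg (hp _)] using hsum)
  rw [pgf_eq_sum_ofScalars]
  exact ((ofScalars ℝ p).hasFPowerSeriesOnBall (zero_lt_one.trans_le hradius)).mono one_pos hradius

theorem analyticAt_pgf (hp : ∀ i, 0 ≤ p i) (hsum : Summable p) {s : ℝ} (hs : |s| < 1) :
    AnalyticAt ℝ (pgf p) s :=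
  (hasFPowerSeriesOnBall_pgf hp hsum).analyticAt_of_mem
    (by simpa [enorm_eq_nnnorm, ← NNReal.coe_lt_one] using hs)

theorem pgf_nonneg (hp : ∀ i, 0 ≤ p i) {s : ℝ} (hs : 0 ≤ s) : 0 ≤ pgf p s :=
  tsum_nonneg fun i ↦ mul_nonneg (hp i) (pow_nonneg hs i)

theorem pgf_lt_one (hp : ∀ i, 0 ≤ p i) (hsum : Summable p) (hpsum : ∑' i, p i = 1) {J : ℕ}
    (hJ : J ≠ 0) (hpJ : 0 < p J) {s : ℝ} (hs : s ∈ Ico 0 1) : pgf p s < 1 := by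
  have hle : ∀ i, p i * s ^ i ≤ p i := fun i ↦
    mul_le_of_le_one_right (hp i) (pow_le_one₀ hs.1 hs.2.le)
  rw [← hpsum]
  refine Summable.tsum_lt_tsum (i := J) hle ?_ (hsum.of_nonneg_of_le ?_ hle) hsum
  · exact mul_lt_of_lt_one_right hpJ (pow_lt_one₀ hs.1 hs.2 hJ)
  · exact fun i ↦ mul_nonneg (hp i) (pow_nonneg hs.1 i)

theorem iterate_pgf_zero_mem_Ico (hp : ∀ i, 0 ≤ p i) (hsum : Summable p)
    (hpsum : ∑' i, p i = 1) {J : ℕ} (hJ : J ≠ 0) (hpJ : 0 < p J) (k : ℕ) :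
    (pgf p)^[k] 0 ∈ Ico 0 1 := by
  induction k with
  | zero => simp
  | succ k ih =>
    rw [Function.iterate_succ_apply']
    exact ⟨pgf_nonneg hp ih.1, pgf_lt_one hp hsum hpsum hJ hpJ ih⟩

end GeneratingFunction

/-- for a probability generating function `f` with iterates `f_n = f^[n]`,
`J₀ = min{j ≥ 1 : P(ξ = j) > 0}`, `P(ξ = J₀) > 0` and `f'(f_n(0)) > 0` for all `n`,
one has `J₀! P(Z(n+1) = J₀) = f_{n+1}^{(J₀)}(0) = J₀! P(ξ = J₀) ∏_{i=1}^n f'(f_i(0)) > 0`. -/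
theorem stmt18 (p : ℕ → ℝ) (hp : ∀ i, 0 ≤ p i) (hpsum : ∑' i, p i = 1)
    (f : ℝ → ℝ) (hf : ∀ s, f s = ∑' i, p i * s ^ i)
    (J0 : ℕ) (hJ0 : 1 ≤ J0) (hpJ0 : 0 < p J0)
    (hmin : ∀ j, 1 ≤ j → j < J0 → p j = 0)
    (hderiv : ∀ n : ℕ, 0 < deriv f (f^[n] 0)) (n : ℕ) :
    iteratedDeriv J0 (f^[n + 1]) 0 =
      (J0.factorial : ℝ) * p J0 * ∏ i ∈ Finset.Icc 1 n, deriv f (f^[i] 0) ∧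
    0 < iteratedDeriv J0 (f^[n + 1]) 0 := by
  have hsum : Summable p := by
    by_contra h
    simp [tsum_eq_zero_of_not_summable h] at hpsum
  obtain rfl : f = pgf p := funext hf
  have hanalytic : ∀ i, AnalyticAt ℝ (pgf p) ((pgf p)^[i] 0) := fun i ↦ by
    obtain ⟨h0, h1⟩ :=
      iterate_pgf_zero_mem_Ico hp hsum hpsum (Nat.one_le_iff_ne_zero.mp hJ0) hpJ0 i
    exact analyticAt_pgf hp hsum (abs_lt.2 ⟨by linarith, h1⟩)
  obtain ⟨Q, hQ, -, hQJ⟩ :=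
    (hasFPowerSeriesOnBall_pgf hp hsum).hasFPowerSeriesAt.exists_hasFPowerSeriesAt_iterate
    (fun j hj ↦ by simpa using hmin j hj.1 hj.2) hJ0 hanalytic n
  rw [hQ.iteratedDeriv_eq_factorial_smul_coeff, hQJ, coeff_ofScalars, nsmul_eq_mul]
  have hprod := Finset.prod_pos fun i (_ : i ∈ Finset.Icc 1 n) ↦ hderiv i
  exact ⟨by ring, by positivity⟩
end
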